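/- arXiv:2307.03896 — 10 statements merged into one kernel-verified Lean document; each statement's English description precedes it below -/
import Mathlib

section
/- Let α > 0, n ∈ ℕ, η ∈ ℝ, and h ∈ (0,1). Then the diagonal value of the Volterra kernel is K_n(η; h, h) = (π/2)·√(p(h)·h·(1−h)); in particular K_n(η; h, h) > 0. -/
open MeasureTheory Real Polynomial

/-- `p(h) = (α² + h²)/(2h)`. -/
noncomputable def pRad (α h : ℝ) : ℝ := (α ^ 2 + h ^ 2) / (2 * h)

/-- `R(h) = p(h) - h`. -/
noncomputable def RRad (α h : ℝ) : ℝ := pRad α h - h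

/-- The Volterra kernel `K_n(η; h, u)`, defined as an integral over `v ∈ (0,1)`,
with `t = u + v(h - u)`. -/
noncomputable def volterraK (α : ℝ) (n : ℕ) (η h u : ℝ) : ℝ :=
  2 * (1 - u) * ∫ v in Set.Ioo (0 : ℝ) 1,
    ((u + v * (h - u)) * ((u + v * (h - u)) + RRad α h) *
        Real.cos (η * Real.sqrt (pRad α h ^ 2 - ((u + v * (h - u)) + RRad α h) ^ 2)) *
        (Chebyshev.T ℝ (n : ℤ)).eval
          (((1 - u) ^ 2 + 1 - (u + v * (h - u)) ^ 2) / (2 * (1 - u)))) /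
      (Real.sqrt v * Real.sqrt (1 - v) *
        Real.sqrt (pRad α h + (u + v * (h - u)) + RRad α h) *
        Real.sqrt ((u + v * (h - u)) + u) *
        Real.sqrt (2 + (u + v * (h - u)) - u) *
        Real.sqrt (2 - (u + v * (h - u)) - u))

/-! On the diagonal `u = h` the node `t` is frozen at `h`, so `t + R(h) = p(h)` kills the cosine's
argument and the Chebyshev argument is `1`; the integrand collapses to a constant multiple of the
arcsine density `1/√(v(1-v))`, whose integral over `(0,1)` is `π` (an antiderivative is
`arcsin (2v - 1)`). -/

open Set

theorem hasDerivAt_arcsin_two_mul_sub_one {v : ℝ} (hv : v ∈ Ioo (0 : ℝ) 1) :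
    HasDerivAt (fun v => arcsin (2 * v - 1)) (1 / (√v * √(1 - v))) v := by
  obtain ⟨hv0, hv1⟩ := hv
  have hsqrt : √(1 - (2 * v - 1) ^ 2) = 2 * (√v * √(1 - v)) := by
    rw [show 1 - (2 * v - 1) ^ 2 = 2 ^ 2 * (v * (1 - v)) by ring,
      sqrt_mul (by positivity), sqrt_sq zero_le_two, sqrt_mul hv0.le]
  have h := (hasDerivAt_arcsin (x := 2 * v - 1) (by linarith) (by linarith)).comp v
    (((hasDerivAt_id v).const_mul 2).sub_const 1)
  rwa [hsqrt, show 1 / (2 * (√v * √(1 - v))) * (2 * 1) = 1 / (√v * √(1 - v)) by ring] at h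

theorem integral_Ioo_one_div_sqrt_mul_sqrt_one_sub :
    ∫ v in Ioo (0 : ℝ) 1, 1 / (√v * √(1 - v)) = π := by
  have hcont : ContinuousOn (fun v : ℝ => arcsin (2 * v - 1)) (Icc 0 1) := by fun_prop
  have hderiv := fun v (hv : v ∈ Ioo (0 : ℝ) 1) => hasDerivAt_arcsin_two_mul_sub_one hv
  have hint := intervalIntegral.integrableOn_deriv_of_nonneg hcont hderiv
    fun v _ => by positivity
  rw [← integral_Ioc_eq_integral_Ioo, ← intervalIntegral.integral_of_le zero_le_one,
    intervalIntegral.integral_eq_sub_of_hasDerivAt_of_le zero_le_one hcont hderiv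
      ((intervalIntegrable_iff_integrableOn_Ioc_of_le zero_le_one).2 hint)]
  norm_num [arcsin_one, arcsin_neg_one]

theorem pRad_pos (α : ℝ) {h : ℝ} (hh : 0 < h) : 0 < pRad α h := by
  unfold pRad
  positivity

theorem add_RRad (α h : ℝ) : h + RRad α h = pRad α h := by
  rw [RRad]
  ring

theorem sqrt_volterraK_diag_denominator (α : ℝ) {h : ℝ} (hh : 0 < h) :
    √(pRad α h + h + RRad α h) * √(h + h) * √(2 + h - h) * √(2 - h - h) =
      4 * √(pRad α h * h * (1 - h)) := by
  have hp := (pRad_pos α hh).le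
  rw [RRad, show pRad α h + h + (pRad α h - h) = 2 * pRad α h by ring,
    show h + h = 2 * h by ring, show 2 + h - h = (2 : ℝ) by ring,
    ← sqrt_mul (by positivity), ← sqrt_mul (by positivity), ← sqrt_mul (by positivity),
    show 2 * pRad α h * (2 * h) * 2 * (2 - h - h) = 4 ^ 2 * (pRad α h * h * (1 - h)) by ring,
    sqrt_mul (by positivity), sqrt_sq zero_le_four]

theorem volterraK_self (α : ℝ) (n : ℕ) (η : ℝ) {h : ℝ} (hh0 : 0 < h) (hh1 : h < 1) :
    volterraK α n η h h = 2 * (1 - h) * ∫ v in Ioo (0 : ℝ) 1,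
      h * pRad α h / (4 * √(pRad α h * h * (1 - h))) * (1 / (√v * √(1 - v))) := by
  rw [volterraK]
  congr 1
  refine setIntegral_congr_fun measurableSet_Ioo fun v _ => ?_
  have hcheb : ((1 - h) ^ 2 + 1 - h ^ 2) / (2 * (1 - h)) = 1 := by
    rw [div_eq_one_iff_eq (by linarith)]
    ring
  simp only [sub_self, mul_zero, add_zero, add_RRad, sqrt_zero, cos_zero, hcheb,
    Chebyshev.T_eval_one]
  have hden' : √v * √(1 - v) * √(pRad α h + h + RRad α h) * √(h + h) * √(2 + h - h) *
      √(2 - h - h) = √v * √(1 - v) * (4 * √(pRad α h * h * (1 - h))) := by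
    rw [← sqrt_volterraK_diag_denominator α hh0]
    ring
  rw [hden']
  field_simp

theorem volterraK_diag_general (α : ℝ) (n : ℕ) (η : ℝ)
    (h : ℝ) (hh : h ∈ Set.Ioo (0 : ℝ) 1) :
    volterraK α n η h h = Real.pi / 2 * Real.sqrt (pRad α h * h * (1 - h)) ∧
      0 < volterraK α n η h h := by
  obtain ⟨hh0, hh1⟩ := hh
  have hpos : 0 < pRad α h * h * (1 - h) :=
    mul_pos (mul_pos (pRad_pos α hh0) hh0) (sub_pos.2 hh1)
  have hK : volterraK α n η h h = π / 2 * √(pRad α h * h * (1 - h)) := by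
    rw [volterraK_self α n η hh0 hh1, integral_const_mul,
      integral_Ioo_one_div_sqrt_mul_sqrt_one_sub]
    set s := √(pRad α h * h * (1 - h))
    have hs : s * s = pRad α h * h * (1 - h) := mul_self_sqrt hpos.le
    have hs0 : s ≠ 0 := (sqrt_pos.2 hpos).ne'
    field_simp
    linear_combination (-4) * hs
  exact ⟨hK, hK ▸ by positivity⟩

/-- The diagonal value of the Volterra kernel:
`K_n(η; h, h) = (π/2)·√(p(h)·h·(1−h)) > 0`. -/
theorem volterraK_diag (α : ℝ) (hα : 0 < α) (n : ℕ) (η : ℝ)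
    (h : ℝ) (hh : h ∈ Set.Ioo (0 : ℝ) 1) :
    volterraK α n η h h = Real.pi / 2 * Real.sqrt (pRad α h * h * (1 - h)) ∧
      0 < volterraK α n η h h :=
  volterraK_diag_general α n η h hh
end

section
/- Let t ∈ (0,1), n ∈ ℕ, and let F : [1−t, 1+t] → ℝ be continuous. For φ ∈ [0,π] set r(φ) = √(t² + 1 − 2t cos φ). Then ∫₀^π T_n((r(φ)² + 1 − t²)/(2 r(φ)))·F(r(φ)) dφ = ∫_{1−t}^{1+t} T_n((r² + 1 − t²)/(2r))·F(r) / √(1 − ((r² + 1 − t²)/(2r))²) dr, where the right-hand side is a convergent improper integral. -/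
open MeasureTheory Real Polynomial

/-! On `[0, π]` the map `φ ↦ r = √(t² + 1 − 2t cos φ)` increases strictly from `1 − t` to
`1 + t`, with `r' = t sin φ / r`. In the triangle with sides `1`, `t`, `r` (and angle `φ`
between `1` and `t`), `c = (r² + 1 − t²) / (2r)` is the cosine of the angle opposite `t`, whose
sine is `t sin φ / r` by the law of sines. Hence `√(1 − c²) = r'`, and the identity is the
change of variables `r = r(φ)` for an arbitrary continuous integrand `h(r)`; integrability on
the `r` side is inherited from the `φ` side. -/

noncomputable def lemonRadius (t φ : ℝ) : ℝ := √(t ^ 2 + 1 - 2 * t * cos φ)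

section lemonRadius

open Set

variable {t : ℝ}

theorem sq_one_sub_abs_le_sq_add_one_sub_mul_cos (t φ : ℝ) :
    (1 - |t|) ^ 2 ≤ t ^ 2 + 1 - 2 * t * cos φ := by
  have : t * cos φ ≤ |t| := (le_abs_self _).trans <| by
    rw [abs_mul]; exact mul_le_of_le_one_right (abs_nonneg t) (abs_cos_le_one φ)
  nlinarith [sq_abs t]

theorem lemonRadius_sq (t φ : ℝ) : lemonRadius t φ ^ 2 = t ^ 2 + 1 - 2 * t * cos φ :=
  sq_sqrt ((sq_nonneg _).trans (sq_one_sub_abs_le_sq_add_one_sub_mul_cos t φ))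

theorem one_sub_abs_le_lemonRadius (t φ : ℝ) : 1 - |t| ≤ lemonRadius t φ :=
  (le_abs_self _).trans (abs_le_sqrt (sq_one_sub_abs_le_sq_add_one_sub_mul_cos t φ))

theorem lemonRadius_pos (ht : |t| < 1) (φ : ℝ) : 0 < lemonRadius t φ :=
  (sub_pos.2 ht).trans_le (one_sub_abs_le_lemonRadius t φ)

theorem continuous_lemonRadius (t : ℝ) : Continuous (lemonRadius t) := by
  unfold lemonRadius; fun_prop

theorem hasDerivAt_lemonRadius (ht : |t| < 1) (φ : ℝ) :
    HasDerivAt (lemonRadius t) (t * sin φ / lemonRadius t φ) φ := by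
  have hr := (lemonRadius_pos ht φ).ne'
  have h : HasDerivAt (lemonRadius t) (-(2 * t * -sin φ) / (2 * lemonRadius t φ)) φ :=
    (((hasDerivAt_cos φ).const_mul (2 * t)).const_sub (t ^ 2 + 1)).sqrt
      (by rw [← lemonRadius_sq]; positivity)
  exact h.congr_deriv (by field_simp)

theorem lemonRadius_zero (ht : t ≤ 1) : lemonRadius t 0 = 1 - t := by
  rw [lemonRadius, cos_zero, show t ^ 2 + 1 - 2 * t * 1 = (1 - t) ^ 2 by ring,
    sqrt_sq (by linarith)]

theorem lemonRadius_pi (ht : -1 ≤ t) : lemonRadius t π = 1 + t := by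
  rw [lemonRadius, cos_pi, show t ^ 2 + 1 - 2 * t * -1 = (1 + t) ^ 2 by ring,
    sqrt_sq (by linarith)]

theorem strictMonoOn_lemonRadius (ht : 0 < t) : StrictMonoOn (lemonRadius t) (Icc 0 π) :=
  fun a ha b hb hab ↦
    sqrt_lt_sqrt ((sq_nonneg _).trans (sq_one_sub_abs_le_sq_add_one_sub_mul_cos t a))
      (by nlinarith [strictAntiOn_cos ha hb hab])

theorem image_lemonRadius_Ioo (ht₀ : 0 < t) (ht₁ : t ≤ 1) :
    lemonRadius t '' Ioo 0 π = Ioo (1 - t) (1 + t) := by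
  rw [← lemonRadius_zero ht₁, ← lemonRadius_pi (by linarith)]
  exact (continuous_lemonRadius t).continuousOn.image_Ioo_of_strictMonoOn pi_pos.le
    (strictMonoOn_lemonRadius ht₀)

theorem mapsTo_lemonRadius_Icc (ht₀ : 0 < t) (ht₁ : t ≤ 1) :
    MapsTo (lemonRadius t) (Icc 0 π) (Icc (1 - t) (1 + t)) := by
  rw [← lemonRadius_zero ht₁, ← lemonRadius_pi (by linarith)]
  exact (strictMonoOn_lemonRadius ht₀).monotoneOn.mapsTo_Icc

theorem one_sub_sq_lemonRadius_cos (φ : ℝ) (hr : lemonRadius t φ ≠ 0) :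
    1 - ((lemonRadius t φ ^ 2 + 1 - t ^ 2) / (2 * lemonRadius t φ)) ^ 2 =
      (t * sin φ / lemonRadius t φ) ^ 2 := by
  field_simp
  rw [lemonRadius_sq]
  nlinarith [sin_sq_add_cos_sq φ]

theorem integral_comp_lemonRadius (ht₀ : 0 < t) (ht₁ : t < 1) {h : ℝ → ℝ}
    (hh : ContinuousOn h (Icc (1 - t) (1 + t))) :
    IntegrableOn (fun r ↦ h r / √(1 - ((r ^ 2 + 1 - t ^ 2) / (2 * r)) ^ 2))
      (Ioo (1 - t) (1 + t)) ∧
    ∫ φ in Ioo 0 π, h (lemonRadius t φ) =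
      ∫ r in Ioo (1 - t) (1 + t), h r / √(1 - ((r ^ 2 + 1 - t ^ 2) / (2 * r)) ^ 2) := by
  have habs : |t| < 1 := by rwa [abs_of_pos ht₀]
  have hderiv : ∀ φ ∈ Ioo 0 π,
      HasDerivWithinAt (lemonRadius t) (t * sin φ / lemonRadius t φ) (Ioo 0 π) φ :=
    fun φ _ ↦ (hasDerivAt_lemonRadius habs φ).hasDerivWithinAt
  have hinj : InjOn (lemonRadius t) (Ioo 0 π) :=
    (strictMonoOn_lemonRadius ht₀).injOn.mono Ioo_subset_Icc_self
  have hjacobian : ∀ φ ∈ Ioo 0 π, |t * sin φ / lemonRadius t φ| •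
      (h (lemonRadius t φ) / √(1 - ((lemonRadius t φ ^ 2 + 1 - t ^ 2) /
        (2 * lemonRadius t φ)) ^ 2)) = h (lemonRadius t φ) := by
    intro φ hφ
    have hr := (lemonRadius_pos habs φ).ne'
    have hsin := (sin_pos_of_pos_of_lt_pi hφ.1 hφ.2).ne'
    rw [one_sub_sq_lemonRadius_cos φ hr, sqrt_sq_eq_abs, smul_eq_mul,
      mul_div_cancel₀ _ (abs_ne_zero.2 (by positivity))]
  have hint : IntegrableOn (fun φ ↦ h (lemonRadius t φ)) (Ioo 0 π) :=
    ((hh.comp (continuous_lemonRadius t).continuousOn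
      (mapsTo_lemonRadius_Icc ht₀ ht₁.le)).integrableOn_Icc).mono_set Ioo_subset_Icc_self
  rw [← image_lemonRadius_Ioo ht₀ ht₁.le,
    integrableOn_image_iff_integrableOn_abs_deriv_smul measurableSet_Ioo hderiv hinj,
    integral_image_eq_integral_abs_deriv_smul measurableSet_Ioo hderiv hinj]
  exact ⟨hint.congr_fun (fun φ hφ ↦ (hjacobian φ hφ).symm) measurableSet_Ioo,
    setIntegral_congr_fun measurableSet_Ioo fun φ hφ ↦ (hjacobian φ hφ).symm⟩

end lemonRadius

/-- Change of variables `r = √(t² + 1 − 2t cos φ)` in the angular integral arising in the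
Fourier decomposition of the lemon transform. -/
theorem chebyshev_angular_change_of_variables
    (t : ℝ) (ht : t ∈ Set.Ioo (0 : ℝ) 1) (n : ℕ) (F : ℝ → ℝ)
    (hF : ContinuousOn F (Set.Icc (1 - t) (1 + t))) :
    IntegrableOn
      (fun r : ℝ =>
        (Chebyshev.T ℝ (n : ℤ)).eval ((r ^ 2 + 1 - t ^ 2) / (2 * r)) * F r /
          Real.sqrt (1 - ((r ^ 2 + 1 - t ^ 2) / (2 * r)) ^ 2))
      (Set.Ioo (1 - t) (1 + t)) volume ∧
    (∫ φ in Set.Ioo (0 : ℝ) Real.pi,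
        (Chebyshev.T ℝ (n : ℤ)).eval
            ((Real.sqrt (t ^ 2 + 1 - 2 * t * Real.cos φ) ^ 2 + 1 - t ^ 2) /
              (2 * Real.sqrt (t ^ 2 + 1 - 2 * t * Real.cos φ))) *
          F (Real.sqrt (t ^ 2 + 1 - 2 * t * Real.cos φ))) =
      ∫ r in Set.Ioo (1 - t) (1 + t),
        (Chebyshev.T ℝ (n : ℤ)).eval ((r ^ 2 + 1 - t ^ 2) / (2 * r)) * F r /
          Real.sqrt (1 - ((r ^ 2 + 1 - t ^ 2) / (2 * r)) ^ 2) := by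
  obtain ⟨ht₀, ht₁⟩ := ht
  have hpos : ∀ r ∈ Set.Icc (1 - t) (1 + t), 2 * r ≠ 0 := fun r hr ↦
    (by linarith [hr.1] : 0 < 2 * r).ne'
  refine integral_comp_lemonRadius ht₀ ht₁
    (h := fun r ↦ (Chebyshev.T ℝ (n : ℤ)).eval ((r ^ 2 + 1 - t ^ 2) / (2 * r)) * F r) ?_
  exact ((Polynomial.continuous _).comp_continuousOn
    (ContinuousOn.div (by fun_prop) (by fun_prop) hpos)).mul hF
end

section
/- Fix α > 0, ε ∈ (0,1), κ ∈ (0, 1−ε), n ∈ ℕ, and η ∈ ℝ. On the triangle T = {(h,u) : ε ≤ u ≤ h ≤ 1−κ} there exists a constant C > 0 such that |K_n(η; h, u)| ≤ C for all (h,u) ∈ T, the function h ↦ K_n(η; h, u) is differentiable on [u, 1−κ] for each fixed u ∈ [ε, 1−κ], and |∂K_n/∂h (η; h, u)| ≤ C for all (h,u) ∈ T. -/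
open MeasureTheory Real Polynomial

/-!
After the substitution `t = u + v (h - u)` the kernel is
`2 (1 - u) ∫₀¹ G(u, h, v) dv / √(v (1 - v))`. The weight is integrable (it is the Beta integral `B(1/2, 1/2)`), and `G` is `C¹` near every point
of a compact prism `[a, b]² × [0, 1]` with `0 < a`, `b < 1` containing the triangle. The only
delicate factor is `cos (η √x)` with `x = p² - (t + R)² = (h - t) (α²/h + t)`, which vanishes at
`t = h` where `√` is not differentiable; but `cos (η √x) = ∑ (-η² x)ᵏ / (2k)!` is an entire function
of `x`. So `G` and `∂G/∂h` are bounded on the prism, and dominated convergence lets us differentiate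
under the integral sign, giving the derivative and its bound at once.
-/

open scoped Nat

noncomputable def cosSqrtCoeff (η : ℝ) (k : ℕ) : ℝ := (-η ^ 2) ^ k / (2 * k)!

noncomputable def cosSqrt (η : ℝ) : ℝ → ℝ :=
  FormalMultilinearSeries.ofScalarsSum (cosSqrtCoeff η)

lemma radius_ofScalars_cosSqrtCoeff (η : ℝ) :
    (FormalMultilinearSeries.ofScalars ℝ (cosSqrtCoeff η)).radius = ⊤ := by
  refine FormalMultilinearSeries.radius_eq_top_of_summable_norm _ fun r => ?_
  refine (Real.hasSum_cosh (|η| * √r)).summable.congr fun k => ?_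
  rw [FormalMultilinearSeries.ofScalars_norm, cosSqrtCoeff, Real.norm_eq_abs, abs_div, abs_pow,
    abs_neg, pow_mul, mul_pow, Real.sq_sqrt r.coe_nonneg, sq_abs, Nat.abs_cast, abs_pow, sq_abs]
  ring

@[fun_prop]
lemma contDiff_cosSqrt (η : ℝ) {n : WithTop ℕ∞} : ContDiff ℝ n (cosSqrt η) := by
  have h := (FormalMultilinearSeries.ofScalars ℝ (cosSqrtCoeff η)).hasFPowerSeriesOnBall
    (by rw [radius_ofScalars_cosSqrtCoeff]; exact ENNReal.zero_lt_top)
  rw [radius_ofScalars_cosSqrtCoeff] at h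
  exact AnalyticOnNhd.contDiff fun y _ => h.analyticAt_of_mem (by simp)

lemma cosSqrt_of_nonneg (η : ℝ) {y : ℝ} (hy : 0 ≤ y) : cosSqrt η y = cos (η * √y) := by
  rw [cosSqrt, FormalMultilinearSeries.ofScalars_sum_eq, Real.cos_eq_tsum]
  refine tsum_congr fun k => ?_
  rw [cosSqrtCoeff, smul_eq_mul, pow_mul, mul_pow, Real.sq_sqrt hy, neg_pow]
  ring

@[fun_prop]
lemma Polynomial.contDiff_eval {𝕜 : Type*} [NontriviallyNormedField 𝕜] (p : 𝕜[X])
    {n : WithTop ℕ∞} : ContDiff 𝕜 n (fun x => p.eval x) := by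
  simpa using p.contDiff_aeval (𝕜 := 𝕜) n

lemma DifferentiableAt.hasDerivAt_partial₂ {E : Type*} [NormedAddCommGroup E] [NormedSpace ℝ E]
    {f : ℝ × ℝ × ℝ → E} {u h v : ℝ} (hf : DifferentiableAt ℝ f (u, h, v)) :
    HasDerivAt (fun h' => f (u, h', v)) (fderiv ℝ f (u, h, v) (0, 1, 0)) h := by
  have hmk : HasDerivAt (fun h' : ℝ => (u, h', v)) ((0 : ℝ), (1 : ℝ), (0 : ℝ)) h :=
    (hasDerivAt_const h u).prodMk ((hasDerivAt_id h).prodMk (hasDerivAt_const h v))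
  exact hf.hasFDerivAt.comp_hasDerivAt h hmk

lemma pRad_add_add_RRad {α h : ℝ} (hh : h ≠ 0) (t : ℝ) :
    pRad α h + t + RRad α h = α ^ 2 / h + t := by
  rw [RRad, pRad]; field_simp; ring

lemma pRad_sq_sub_add_RRad_sq {α h : ℝ} (hh : h ≠ 0) (t : ℝ) :
    pRad α h ^ 2 - (t + RRad α h) ^ 2 = (h - t) * (α ^ 2 / h + t) := by
  rw [RRad, pRad]; field_simp; ring

noncomputable def volterraIntegrand (α η : ℝ) (n : ℕ) (u h t : ℝ) : ℝ :=
  t * (t + RRad α h) * cosSqrt η (pRad α h ^ 2 - (t + RRad α h) ^ 2) *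
      (Chebyshev.T ℝ (n : ℤ)).eval (((1 - u) ^ 2 + 1 - t ^ 2) / (2 * (1 - u))) /
    (√(pRad α h + t + RRad α h) * √(t + u) * √(2 + t - u) * √(2 - t - u))

noncomputable def volterraIntegrandV (α η : ℝ) (n : ℕ) (w : ℝ × ℝ × ℝ) : ℝ :=
  volterraIntegrand α η n w.1 w.2.1 (w.1 + w.2.2 * (w.2.1 - w.1))

lemma contDiffAt_volterraIntegrand (α η : ℝ) (n : ℕ) {x : ℝ × ℝ × ℝ} (hu : 0 < x.1)
    (hu₁ : x.1 < 1) (hh : 0 < x.2.1) (ht : 0 < x.2.2) (ht₁ : x.2.2 < 1) :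
    ContDiffAt ℝ 1 (fun x : ℝ × ℝ × ℝ => volterraIntegrand α η n x.1 x.2.1 x.2.2) x := by
  have hp : 0 < pRad α x.2.1 + x.2.2 + RRad α x.2.1 := by
    rw [pRad_add_add_RRad hh.ne']; positivity
  unfold volterraIntegrand RRad pRad at *
  fun_prop (disch := (apply ne_of_gt; (try apply_rules [mul_pos, Real.sqrt_pos.mpr]) <;> linarith))

section

variable (α η : ℝ) (n : ℕ) {a b : ℝ}

lemma contDiffAt_volterraIntegrandV (ha : 0 < a) (hb : b < 1) {w : ℝ × ℝ × ℝ}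
    (hw : w ∈ Set.Icc (a, a, 0) (b, b, 1)) : ContDiffAt ℝ 1 (volterraIntegrandV α η n) w := by
  obtain ⟨u, h, v⟩ := w
  simp only [Set.mem_Icc, Prod.mk_le_mk] at hw
  obtain ⟨⟨hu, hh, hv⟩, ⟨hu', hh', hv'⟩⟩ := hw
  have ht : a ≤ u + v * (h - u) := by nlinarith
  have ht' : u + v * (h - u) ≤ b := by nlinarith
  exact ContDiffAt.comp (g := fun x : ℝ × ℝ × ℝ => volterraIntegrand α η n x.1 x.2.1 x.2.2)
    (f := fun x : ℝ × ℝ × ℝ => (x.1, x.2.1, x.1 + x.2.2 * (x.2.1 - x.1))) (u, h, v)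
    (contDiffAt_volterraIntegrand α η n (x := (u, h, u + v * (h - u)))
      (by linarith) (by linarith) (by linarith) (by linarith) (by linarith)) (by fun_prop)

lemma continuousOn_volterraIntegrandV (ha : 0 < a) (hb : b < 1) :
    ContinuousOn (volterraIntegrandV α η n) (Set.Icc (a, a, 0) (b, b, 1)) := fun _ hw =>
  (contDiffAt_volterraIntegrandV α η n ha hb hw).continuousAt.continuousWithinAt

lemma continuousOn_fderiv_volterraIntegrandV_apply (ha : 0 < a) (hb : b < 1) (d : ℝ × ℝ × ℝ) :
    ContinuousOn (fun w => fderiv ℝ (volterraIntegrandV α η n) w d)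
      (Set.Icc (a, a, 0) (b, b, 1)) := fun _ hw =>
  (((contDiffAt_volterraIntegrandV α η n ha hb hw).fderiv_right (m := 0) le_rfl).continuousAt
    |>.clm_apply continuousAt_const).continuousWithinAt

lemma exists_bound_volterraIntegrandV (ha : 0 < a) (hb : b < 1) :
    ∃ M, ∀ w ∈ Set.Icc (a, a, 0) (b, b, 1),
      |volterraIntegrandV α η n w| ≤ M ∧ |fderiv ℝ (volterraIntegrandV α η n) w (0, 1, 0)| ≤ M := by
  obtain ⟨M₁, hM₁⟩ :=
    isCompact_Icc.exists_bound_of_continuousOn (continuousOn_volterraIntegrandV α η n ha hb)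
  obtain ⟨M₂, hM₂⟩ := isCompact_Icc.exists_bound_of_continuousOn
    (continuousOn_fderiv_volterraIntegrandV_apply α η n ha hb (0, 1, 0))
  exact ⟨max M₁ M₂, fun w hw => ⟨(hM₁ w hw).trans (le_max_left _ _),
    (hM₂ w hw).trans (le_max_right _ _)⟩⟩

end

noncomputable def arcsineWeight (v : ℝ) : ℝ := (√v * √(1 - v))⁻¹

lemma arcsineWeight_nonneg (v : ℝ) : 0 ≤ arcsineWeight v := by
  unfold arcsineWeight; positivity

lemma continuousOn_arcsineWeight : ContinuousOn arcsineWeight (Set.Ioo 0 1) := by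
  unfold arcsineWeight
  exact ContinuousOn.inv₀ (by fun_prop) fun v hv =>
    mul_ne_zero (Real.sqrt_pos.2 hv.1).ne' (Real.sqrt_pos.2 (sub_pos.2 hv.2)).ne'

lemma integrableOn_arcsineWeight : IntegrableOn arcsineWeight (Set.Ioo 0 1) := by
  have h := Complex.betaIntegral_convergent (u := 1 / 2) (v := 1 / 2) (by norm_num) (by norm_num)
  rw [intervalIntegrable_iff_integrableOn_Ioo_of_le zero_le_one] at h
  refine IntegrableOn.congr_fun (Integrable.norm h) (fun v hv => ?_) measurableSet_Ioo
  have hv' : 0 < 1 - v := sub_pos.2 hv.2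
  rw [arcsineWeight, norm_mul, ← Complex.ofReal_one, ← Complex.ofReal_sub,
    Complex.norm_cpow_eq_rpow_re_of_pos hv.1, Complex.norm_cpow_eq_rpow_re_of_pos hv', mul_inv,
    Real.sqrt_eq_rpow, Real.sqrt_eq_rpow, ← Real.rpow_neg hv.1.le, ← Real.rpow_neg hv'.le]
  norm_num

lemma integrableOn_mul_arcsineWeight {f : ℝ → ℝ} {M : ℝ} (hf : ContinuousOn f (Set.Ioo 0 1))
    (hM : ∀ v ∈ Set.Ioo (0 : ℝ) 1, |f v| ≤ M) :
    IntegrableOn (fun v => f v * arcsineWeight v) (Set.Ioo 0 1) := by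
  refine (integrableOn_arcsineWeight.const_mul M).mono'
    ((hf.mul continuousOn_arcsineWeight).aestronglyMeasurable measurableSet_Ioo) ?_
  filter_upwards [ae_restrict_mem measurableSet_Ioo] with v hv
  rw [Real.norm_eq_abs, abs_mul, abs_of_nonneg (arcsineWeight_nonneg v)]
  exact mul_le_mul_of_nonneg_right (hM v hv) (arcsineWeight_nonneg v)

noncomputable def weightedIntegral (u : ℝ) (f : ℝ → ℝ) : ℝ :=
  2 * (1 - u) * ∫ v in Set.Ioo 0 1, f v * arcsineWeight v

lemma abs_weightedIntegral_le {u M : ℝ} {f : ℝ → ℝ} (hu : u ∈ Set.Icc 0 1)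
    (hM : ∀ v ∈ Set.Ioo (0 : ℝ) 1, |f v| ≤ M) :
    |weightedIntegral u f| ≤ 2 * M * ∫ v in Set.Ioo 0 1, arcsineWeight v := by
  have hI : |∫ v in Set.Ioo 0 1, f v * arcsineWeight v| ≤
      M * ∫ v in Set.Ioo 0 1, arcsineWeight v := by
    rw [← integral_const_mul, ← Real.norm_eq_abs]
    refine norm_integral_le_of_norm_le (integrableOn_arcsineWeight.const_mul M) ?_
    filter_upwards [ae_restrict_mem measurableSet_Ioo] with v hv
    rw [Real.norm_eq_abs, abs_mul, abs_of_nonneg (arcsineWeight_nonneg v)]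
    exact mul_le_mul_of_nonneg_right (hM v hv) (arcsineWeight_nonneg v)
  have hc : |2 * (1 - u)| ≤ 2 := by
    rw [abs_of_nonneg (by linarith [hu.2])]; linarith [hu.1]
  rw [weightedIntegral, abs_mul, mul_assoc]
  exact (mul_le_mul_of_nonneg_right hc (abs_nonneg _)).trans (by linarith)

lemma volterraK_eq_weightedIntegral (α η : ℝ) (n : ℕ) {u h : ℝ} (hu : 0 < u) (huh : u ≤ h) :
    volterraK α n η h u = weightedIntegral u (fun v => volterraIntegrandV α η n (u, h, v)) := by
  rw [volterraK, weightedIntegral]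
  congr 1
  refine setIntegral_congr_fun measurableSet_Ioo fun v hv => ?_
  have hx : 0 ≤ pRad α h ^ 2 - (u + v * (h - u) + RRad α h) ^ 2 := by
    rw [pRad_sq_sub_add_RRad_sq (by linarith)]
    have : 0 ≤ (1 - v) * (h - u) := mul_nonneg (by linarith [hv.2]) (by linarith)
    have : 0 < u + v * (h - u) := by nlinarith [hv.1]
    have : 0 < h := by linarith
    exact mul_nonneg (by linarith) (by positivity)
  simp only [volterraIntegrandV, volterraIntegrand, arcsineWeight, cosSqrt_of_nonneg η hx]
  ring

lemma hasDerivAt_weightedIntegral_volterraIntegrandV (α η : ℝ) (n : ℕ) {a b u h₀ : ℝ}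
    (ha : 0 < a) (hb : b < 1) (hu : u ∈ Set.Icc a b) (hh₀ : h₀ ∈ Set.Ioo a b) :
    HasDerivAt (fun h => weightedIntegral u fun v => volterraIntegrandV α η n (u, h, v))
      (weightedIntegral u fun v => fderiv ℝ (volterraIntegrandV α η n) (u, h₀, v) (0, 1, 0))
      h₀ := by
  obtain ⟨M, hM⟩ := exists_bound_volterraIntegrandV α η n ha hb
  have hmem : ∀ h ∈ Set.Ioo a b, ∀ v ∈ Set.Ioo (0 : ℝ) 1, (u, h, v) ∈ Set.Icc (a, a, 0) (b, b, 1) :=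
    fun h hh v hv => ⟨⟨hu.1, hh.1.le, hv.1.le⟩, ⟨hu.2, hh.2.le, hv.2.le⟩⟩
  have hslice : ∀ {f : ℝ × ℝ × ℝ → ℝ}, ContinuousOn f (Set.Icc (a, a, 0) (b, b, 1)) →
      ∀ h ∈ Set.Ioo a b, ContinuousOn (fun v => f (u, h, v)) (Set.Ioo 0 1) :=
    fun hf h hh => hf.comp (by fun_prop) (hmem h hh)
  have hint : ∀ h ∈ Set.Ioo a b,
      IntegrableOn (fun v => volterraIntegrandV α η n (u, h, v) * arcsineWeight v) (Set.Ioo 0 1) :=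
    fun h hh => integrableOn_mul_arcsineWeight
      (hslice (continuousOn_volterraIntegrandV α η n ha hb) h hh)
      fun v hv => (hM _ (hmem h hh v hv)).1
  have hint' : IntegrableOn (fun v => fderiv ℝ (volterraIntegrandV α η n) (u, h₀, v) (0, 1, 0) *
      arcsineWeight v) (Set.Ioo 0 1) :=
    integrableOn_mul_arcsineWeight
      (hslice (continuousOn_fderiv_volterraIntegrandV_apply α η n ha hb _) h₀ hh₀)
      fun v hv => (hM _ (hmem h₀ hh₀ v hv)).2
  refine HasDerivAt.const_mul _ (hasDerivAt_integral_of_dominated_loc_of_deriv_le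
    (F' := fun h v => fderiv ℝ (volterraIntegrandV α η n) (u, h, v) (0, 1, 0) * arcsineWeight v)
    (bound := fun v => M * arcsineWeight v) (Ioo_mem_nhds hh₀.1 hh₀.2)
    (Filter.eventually_of_mem (Ioo_mem_nhds hh₀.1 hh₀.2)
      fun h hh => (hint h hh).aestronglyMeasurable)
    (hint h₀ hh₀) hint'.aestronglyMeasurable ?_ (integrableOn_arcsineWeight.const_mul M) ?_).2
  · filter_upwards [ae_restrict_mem measurableSet_Ioo] with v hv h hh
    rw [Real.norm_eq_abs, abs_mul, abs_of_nonneg (arcsineWeight_nonneg v)]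
    exact mul_le_mul_of_nonneg_right (hM _ (hmem h hh v hv)).2 (arcsineWeight_nonneg v)
  · filter_upwards [ae_restrict_mem measurableSet_Ioo] with v hv h hh
    exact (((contDiffAt_volterraIntegrandV α η n ha hb (hmem h hh v hv)).differentiableAt
      one_ne_zero).hasDerivAt_partial₂).mul_const _

theorem volterraK_bounded_with_bounded_deriv_general
    (α ε κ : ℝ) (hε : ε ∈ Set.Ioo (0 : ℝ) 1) (hκ : κ ∈ Set.Ioo 0 (1 - ε))
    (n : ℕ) (η : ℝ) :
    ∃ C > (0 : ℝ), ∃ K' : ℝ → ℝ → ℝ,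
      ∀ u ∈ Set.Icc ε (1 - κ), ∀ h ∈ Set.Icc u (1 - κ),
        |volterraK α n η h u| ≤ C ∧
        HasDerivWithinAt (fun h' => volterraK α n η h' u) (K' h u)
          (Set.Icc u (1 - κ)) h ∧
        |K' h u| ≤ C := by
  obtain ⟨hε₀, -⟩ := hε
  obtain ⟨hκ₀, -⟩ := hκ
  obtain ⟨M, hM⟩ := exists_bound_volterraIntegrandV α η n (a := ε / 2) (b := 1 - κ / 2)
    (by linarith) (by linarith)
  refine ⟨max (2 * M * ∫ v in Set.Ioo 0 1, arcsineWeight v) 1, lt_max_of_lt_right one_pos,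
    fun h u => weightedIntegral u fun v => fderiv ℝ (volterraIntegrandV α η n) (u, h, v) (0, 1, 0),
    fun u hu h hh => ?_⟩
  have hmem : ∀ v ∈ Set.Ioo (0 : ℝ) 1,
      (u, h, v) ∈ Set.Icc (ε / 2, ε / 2, 0) (1 - κ / 2, 1 - κ / 2, 1) :=
    fun v hv => ⟨⟨by linarith [hu.1], by linarith [hu.1, hh.1], hv.1.le⟩,
      ⟨by linarith [hu.2], by linarith [hh.2], hv.2.le⟩⟩
  have hu₀ : u ∈ Set.Icc 0 1 := ⟨by linarith [hu.1], by linarith [hu.2]⟩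
  have hK := fun h' (hh' : h' ∈ Set.Icc u (1 - κ)) =>
    volterraK_eq_weightedIntegral α η n (by linarith [hu.1]) hh'.1
  refine ⟨?_, ?_, ?_⟩
  · rw [hK h hh]
    exact (abs_weightedIntegral_le hu₀ fun v hv => (hM _ (hmem v hv)).1).trans (le_max_left _ _)
  · exact (hasDerivAt_weightedIntegral_volterraIntegrandV α η n (a := ε / 2) (b := 1 - κ / 2)
      (by linarith) (by linarith)
      ⟨by linarith [hu.1], by linarith [hu.2]⟩ ⟨by linarith [hu.1, hh.1], by linarith [hh.2]⟩
      ).hasDerivWithinAt.congr hK (hK h hh)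
  · exact (abs_weightedIntegral_le hu₀ fun v hv => (hM _ (hmem v hv)).2).trans (le_max_left _ _)

/-- On the triangle `T = {(h,u) : ε ≤ u ≤ h ≤ 1−κ}`, the Volterra kernel `K_n(η; ·, ·)` is
bounded, differentiable in `h`, and has bounded first derivative in `h`. -/
theorem volterraK_bounded_with_bounded_deriv
    (α ε κ : ℝ) (hα : 0 < α) (hε : ε ∈ Set.Ioo (0 : ℝ) 1) (hκ : κ ∈ Set.Ioo 0 (1 - ε))
    (n : ℕ) (η : ℝ) :
    ∃ C > (0 : ℝ), ∃ K' : ℝ → ℝ → ℝ,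
      ∀ u ∈ Set.Icc ε (1 - κ), ∀ h ∈ Set.Icc u (1 - κ),
        |volterraK α n η h u| ≤ C ∧
        HasDerivWithinAt (fun h' => volterraK α n η h' u) (K' h u)
          (Set.Icc u (1 - κ)) h ∧
        |K' h u| ≤ C :=
  volterraK_bounded_with_bounded_deriv_general α ε κ hε hκ n η
end

section
/- Let R ≥ 0 and α > 0, and set p = √(R² + α²). Define g(z) = √(R² + α² − z²) − R for z ∈ (−α, α). Then g(z) > 0 on (−α, α), the function H(z) = z/g(z) is differentiable on (−α, α) with H′(z) = (R² + α² − R√(R² + α² − z²)) / (√(R² + α² − z²)·(√(R² + α² − z²) − R)²), and H′(z) ≥ 1/(p − R) > 0 for all z ∈ (−α, α); consequently H is strictly increasing and injective on (−α, α). -/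
/-!
Write `s = √(R² + α² − z²)` and `p = √(R² + α²)`, so that `R < s ≤ p` on `(−α, α)`.
The quotient rule together with `s² + z² = R² + α²` gives `H′ = (p² − R s) / (s (s − R)²)`.
Since `R s ≤ R p`, the numerator is at least `p (p − R)`, while the denominator is at most
`p (p − R)²`; hence `H′ ≥ 1 / (p − R) > 0`, and `H` is strictly increasing by the mean value
theorem.
-/

open Real

lemma lt_sqrt_add_sq_sub_sq {R α z : ℝ} (hR : 0 ≤ R) (hz : z ∈ Set.Ioo (-α) α) :
    R < √(R ^ 2 + α ^ 2 - z ^ 2) :=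
  (Real.lt_sqrt hR).2 <| by nlinarith [hz.1, hz.2]

lemma hasDerivAt_div_sqrt_sub_sq_sub {c R z : ℝ} (hz : 0 < c - z ^ 2)
    (hR : √(c - z ^ 2) ≠ R) :
    HasDerivAt (fun z' ↦ z' / (√(c - z' ^ 2) - R))
      ((c - R * √(c - z ^ 2)) / (√(c - z ^ 2) * (√(c - z ^ 2) - R) ^ 2)) z := by
  have hs : √(c - z ^ 2) ≠ 0 := (Real.sqrt_pos.2 hz).ne'
  have hden : HasDerivAt (fun z' ↦ √(c - z' ^ 2) - R) (-z / √(c - z ^ 2)) z :=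
    ((((hasDerivAt_pow 2 z).const_sub c).sqrt hz.ne').sub_const R).congr_deriv <| by
      field_simp; ring
  refine ((hasDerivAt_id' z).div hden (sub_ne_zero.2 hR)).congr_deriv ?_
  field_simp
  linear_combination Real.sq_sqrt hz.le

lemma one_div_sub_le_sq_sub_mul_div {R s p : ℝ} (hR : 0 ≤ R) (hRs : R < s) (hsp : s ≤ p) :
    1 / (p - R) ≤ (p ^ 2 - R * s) / (s * (s - R) ^ 2) := by
  have hs : 0 < s := hR.trans_lt hRs
  have hsR : 0 < s - R := sub_pos.2 hRs
  calc 1 / (p - R) = p * (p - R) / (p * (p - R) ^ 2) := by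
        field_simp [(hs.trans_le hsp).ne', (hsR.trans_le (sub_le_sub_right hsp R)).ne']
    _ ≤ (p ^ 2 - R * s) / (s * (s - R) ^ 2) := by
        have hp : 0 ≤ p := hs.le.trans hsp
        refine div_le_div₀ (by nlinarith) (by nlinarith) (by positivity) ?_
        gcongr

/-- Monotonicity of `H(z) = z / g(z)`, where `g(z) = √(R² + α² − z²) − R` is the distance
from a point of the lemon at axial height `z` to the axis of revolution. -/
theorem lemon_axial_ratio_strictMono
    (R α : ℝ) (hR : 0 ≤ R) (hα : 0 < α) :
    (∀ z ∈ Set.Ioo (-α) α, 0 < Real.sqrt (R ^ 2 + α ^ 2 - z ^ 2) - R) ∧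
    (∀ z ∈ Set.Ioo (-α) α,
      HasDerivAt (fun z' : ℝ => z' / (Real.sqrt (R ^ 2 + α ^ 2 - z' ^ 2) - R))
        ((R ^ 2 + α ^ 2 - R * Real.sqrt (R ^ 2 + α ^ 2 - z ^ 2)) /
          (Real.sqrt (R ^ 2 + α ^ 2 - z ^ 2) *
            (Real.sqrt (R ^ 2 + α ^ 2 - z ^ 2) - R) ^ 2)) z ∧
      (1 / (Real.sqrt (R ^ 2 + α ^ 2) - R) ≤
        (R ^ 2 + α ^ 2 - R * Real.sqrt (R ^ 2 + α ^ 2 - z ^ 2)) /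
          (Real.sqrt (R ^ 2 + α ^ 2 - z ^ 2) *
            (Real.sqrt (R ^ 2 + α ^ 2 - z ^ 2) - R) ^ 2)) ∧
      0 < 1 / (Real.sqrt (R ^ 2 + α ^ 2) - R)) ∧
    StrictMonoOn (fun z' : ℝ => z' / (Real.sqrt (R ^ 2 + α ^ 2 - z' ^ 2) - R))
      (Set.Ioo (-α) α) ∧
    Set.InjOn (fun z' : ℝ => z' / (Real.sqrt (R ^ 2 + α ^ 2 - z' ^ 2) - R))
      (Set.Ioo (-α) α) := by
  set p := √(R ^ 2 + α ^ 2)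
  have hp : p ^ 2 = R ^ 2 + α ^ 2 := Real.sq_sqrt (by positivity)
  have hRp : R < p := by simpa using lt_sqrt_add_sq_sub_sq hR (z := 0) ⟨by linarith, hα⟩
  have hpos : 0 < 1 / (p - R) := one_div_pos.2 (sub_pos.2 hRp)
  have hderiv (z : ℝ) (hz : z ∈ Set.Ioo (-α) α) := hasDerivAt_div_sqrt_sub_sq_sub
    (by nlinarith [hz.1, hz.2]) (lt_sqrt_add_sq_sub_sq hR hz).ne'
  have hbound (z : ℝ) (hz : z ∈ Set.Ioo (-α) α) :
      1 / (p - R) ≤ (R ^ 2 + α ^ 2 - R * √(R ^ 2 + α ^ 2 - z ^ 2)) /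
        (√(R ^ 2 + α ^ 2 - z ^ 2) * (√(R ^ 2 + α ^ 2 - z ^ 2) - R) ^ 2) := by
    have hsp : √(R ^ 2 + α ^ 2 - z ^ 2) ≤ p := Real.sqrt_le_sqrt (by nlinarith)
    exact (one_div_sub_le_sq_sub_mul_div hR (lt_sqrt_add_sq_sub_sq hR hz) hsp).trans_eq
      (by rw [hp])
  have hmono := strictMonoOn_of_hasDerivWithinAt_pos (convex_Ioo (-α) α)
    (fun z hz ↦ (hderiv z hz).continuousAt.continuousWithinAt)
    (fun z hz ↦ by rw [interior_Ioo] at hz ⊢; exact (hderiv z hz).hasDerivWithinAt)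
    (fun z hz ↦ by rw [interior_Ioo] at hz; exact hpos.trans_le (hbound z hz))
  exact ⟨fun z hz ↦ sub_pos.2 (lt_sqrt_add_sq_sub_sq hR hz),
    fun z hz ↦ ⟨hderiv z hz, hbound z hz, hpos⟩, hmono, hmono.injOn⟩
end

section
/- Let α > 0, R ≥ 0, z₀ ∈ ℝ, c = (c₁, c₂) ∈ ℝ², and set p = √(R² + α²). Suppose (x, y, z) ∈ ℝ³ satisfies both the lemon equation (√((x−c₁)² + (y−c₂)²) + R)² + (z − z₀)² = p² and the two-sheeted hyperboloid equation (x−c₁)² + (y−c₂)² − (z − z₀)² + α² = 0. Then (x, y) = (c₁, c₂) and z = z₀ + α or z = z₀ − α. In other words, the hyperboloid meets the lemon only at the lemon's two points of self-intersection. -/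
open Real

/-- The two-sheeted hyperboloid meets the lemon only at the lemon's two points of
self-intersection `(c₁, c₂, z₀ ± α)`. -/
theorem hyperboloid_meets_lemon_only_at_singular_points
    (α R z₀ c₁ c₂ x y z : ℝ) (hα : 0 < α) (hR : 0 ≤ R)
    (hlemon : (Real.sqrt ((x - c₁) ^ 2 + (y - c₂) ^ 2) + R) ^ 2 + (z - z₀) ^ 2 =
      Real.sqrt (R ^ 2 + α ^ 2) ^ 2)
    (hhyp : (x - c₁) ^ 2 + (y - c₂) ^ 2 - (z - z₀) ^ 2 + α ^ 2 = 0) :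
    x = c₁ ∧ y = c₂ ∧ (z = z₀ + α ∨ z = z₀ - α) := by
  set d : ℝ := (x - c₁) ^ 2 + (y - c₂) ^ 2 with hd
  have hd0 : 0 ≤ d := by positivity
  have hs : Real.sqrt d ^ 2 = d := Real.sq_sqrt hd0
  have hp : Real.sqrt (R ^ 2 + α ^ 2) ^ 2 = R ^ 2 + α ^ 2 :=
    Real.sq_sqrt (by positivity)
  rw [hp] at hlemon
  have hsnn : 0 ≤ Real.sqrt d := Real.sqrt_nonneg d
  -- from the two equations: d + s*R = 0
  have key : d + Real.sqrt d * R = 0 := by nlinarith [hs]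
  have hdz : d = 0 := by nlinarith [mul_nonneg hsnn hR]
  have hx : x = c₁ := by nlinarith [sq_nonneg (x - c₁), sq_nonneg (y - c₂)]
  have hy : y = c₂ := by nlinarith [sq_nonneg (x - c₁), sq_nonneg (y - c₂)]
  refine ⟨hx, hy, ?_⟩
  have hz2 : (z - z₀) ^ 2 = α ^ 2 := by nlinarith
  rcases sq_eq_sq_iff_eq_or_eq_neg.mp hz2 with h | h
  · left; linarith
  · right; linarith
end

section
/- Let θ₀, z₀ ∈ ℝ, R > 0, and set Θ₀ = (cos θ₀, sin θ₀), Θ₀⊥ = (sin θ₀, −cos θ₀). For i = 1,2 let x_i = (x_i′, z_i) ∈ ℝ² × ℝ with |x_i′| < 1, and set g_i = |x_i′ − Θ₀| (> 0). If g₁ = g₂, z₁ = z₂, and Θ₀⊥·(x₁′ − Θ₀)·(1 + R/g₁) = Θ₀⊥·(x₂′ − Θ₀)·(1 + R/g₂), then x₁ = x₂. (Injectivity of the left projection of the canonical relation of the lemon transform R over the open unit cylinder.) -/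
open Real


lemma cs_aux (c s x y : ℝ) (h : c ^ 2 + s ^ 2 = 1) :
    c * x + s * y ≤ Real.sqrt (x ^ 2 + y ^ 2) := by
  rcases le_or_gt (c * x + s * y) 0 with h0 | h0
  · exact h0.trans (Real.sqrt_nonneg _)
  · have hr := Real.sqrt_nonneg (x ^ 2 + y ^ 2)
    have h2 : Real.sqrt (x ^ 2 + y ^ 2) ^ 2 = x ^ 2 + y ^ 2 :=
      Real.sq_sqrt (by positivity)
    nlinarith [sq_nonneg (c * y - s * x)]

/-- Injectivity of the left projection of the canonical relation of the lemon transform `R`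
over the open unit cylinder. -/
theorem lemonR_leftProjection_injective
    (θ₀ z₀ R : ℝ) (hR : 0 < R)
    (x₁' x₂' : ℝ × ℝ) (z₁ z₂ : ℝ)
    (hx₁ : Real.sqrt (x₁'.1 ^ 2 + x₁'.2 ^ 2) < 1)
    (hx₂ : Real.sqrt (x₂'.1 ^ 2 + x₂'.2 ^ 2) < 1)
    (g₁ g₂ : ℝ)
    (hg₁ : g₁ = Real.sqrt ((x₁'.1 - Real.cos θ₀) ^ 2 + (x₁'.2 - Real.sin θ₀) ^ 2))
    (hg₂ : g₂ = Real.sqrt ((x₂'.1 - Real.cos θ₀) ^ 2 + (x₂'.2 - Real.sin θ₀) ^ 2))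
    (hg₁pos : 0 < g₁) (hg₂pos : 0 < g₂)
    (hgg : g₁ = g₂) (hz : z₁ = z₂)
    (hθ : (Real.sin θ₀ * (x₁'.1 - Real.cos θ₀) - Real.cos θ₀ * (x₁'.2 - Real.sin θ₀)) *
        (1 + R / g₁) =
      (Real.sin θ₀ * (x₂'.1 - Real.cos θ₀) - Real.cos θ₀ * (x₂'.2 - Real.sin θ₀)) *
        (1 + R / g₂)) :
    x₁' = x₂' ∧ z₁ = z₂ := by
  set c := Real.cos θ₀ with hc
  set s := Real.sin θ₀ with hs
  have hcs : c ^ 2 + s ^ 2 = 1 := by rw [hc, hs]; exact Real.cos_sq_add_sin_sq θ₀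
  set a₁ := x₁'.1 - c
  set b₁ := x₁'.2 - s
  set a₂ := x₂'.1 - c
  set b₂ := x₂'.2 - s
  -- squared norms equal
  have hsq₁ : g₁ ^ 2 = a₁ ^ 2 + b₁ ^ 2 := by
    rw [hg₁]; exact Real.sq_sqrt (by positivity)
  have hsq₂ : g₂ ^ 2 = a₂ ^ 2 + b₂ ^ 2 := by
    rw [hg₂]; exact Real.sq_sqrt (by positivity)
  have hnorm : a₁ ^ 2 + b₁ ^ 2 = a₂ ^ 2 + b₂ ^ 2 := by
    rw [← hsq₁, ← hsq₂, hgg]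
  -- perp components equal
  have hfac : (0:ℝ) < 1 + R / g₁ := by positivity
  have hperp : s * a₁ - c * b₁ = s * a₂ - c * b₂ := by
    rw [hgg] at hθ hfac
    exact mul_right_cancel₀ (ne_of_gt hfac) hθ
  -- parallel components are negative
  have hpar₁ : c * a₁ + s * b₁ < 0 := by
    have h1 : c * x₁'.1 + s * x₁'.2 ≤ Real.sqrt (x₁'.1 ^ 2 + x₁'.2 ^ 2) :=
      cs_aux c s _ _ hcs
    have : c * a₁ + s * b₁ = c * x₁'.1 + s * x₁'.2 - 1 := by
      simp only [a₁, b₁]; linear_combination (-1 : ℝ) * hcs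
    linarith
  have hpar₂ : c * a₂ + s * b₂ < 0 := by
    have h1 : c * x₂'.1 + s * x₂'.2 ≤ Real.sqrt (x₂'.1 ^ 2 + x₂'.2 ^ 2) :=
      cs_aux c s _ _ hcs
    have : c * a₂ + s * b₂ = c * x₂'.1 + s * x₂'.2 - 1 := by
      simp only [a₂, b₂]; linear_combination (-1 : ℝ) * hcs
    linarith
  -- parallel components equal
  have hparsq : (c * a₁ + s * b₁) ^ 2 = (c * a₂ + s * b₂) ^ 2 := by
    have e1 : (c * a₁ + s * b₁) ^ 2 =
        (c ^ 2 + s ^ 2) * (a₁ ^ 2 + b₁ ^ 2) - (s * a₁ - c * b₁) ^ 2 := by ring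
    have e2 : (c * a₂ + s * b₂) ^ 2 =
        (c ^ 2 + s ^ 2) * (a₂ ^ 2 + b₂ ^ 2) - (s * a₂ - c * b₂) ^ 2 := by ring
    rw [e1, e2, hnorm, hperp]
  have hpar : c * a₁ + s * b₁ = c * a₂ + s * b₂ := by
    rcases sq_eq_sq_iff_eq_or_eq_neg.mp hparsq with h | h
    · exact h
    · linarith
  have ha : a₁ = a₂ := by linear_combination c * hpar + s * hperp - (a₁ - a₂) * hcs
  have hb : b₁ = b₂ := by linear_combination s * hpar - c * hperp - (b₁ - b₂) * hcs
  refine ⟨Prod.ext ?_ ?_, hz⟩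
  · have : x₁'.1 - c = x₂'.1 - c := ha
    linarith
  · have : x₁'.2 - s = x₂'.2 - s := hb
    linarith
end

section
/- Let α > 0, R > 0, θ₀, z₀ ∈ ℝ, p = √(R² + α²), s = −2R, Θ₀ = (cos θ₀, sin θ₀), Θ₀⊥ = (sin θ₀, −cos θ₀). For i = 1,2 let x_i = (x_i′, z_i) ∈ ℝ² × ℝ with |x_i′| < 1, g_i = |x_i′ − Θ₀| > 0, and suppose x_i lies on the lemon: (g_i + R)² + (z_i − z₀)² = p² with |z_i − z₀| < α. If (z₁ − z₀)/g₁ = (z₂ − z₀)/g₂ and Θ₀⊥·(x₁′ − Θ₀)·(2g₁ − s)/g₁² = Θ₀⊥·(x₂′ − Θ₀)·(2g₂ − s)/g₂², then x₁ = x₂. (Injectivity of the left projection of the canonical relation of the limited-data transform R_L over the open unit cylinder.) -/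
open Real

set_option maxHeartbeats 1000000

/-- Injectivity of the left projection of the canonical relation of the limited-data lemon
transform `R_L` over the open unit cylinder. -/
theorem lemonRL_leftProjection_injective
    (α R θ₀ z₀ : ℝ) (hα : 0 < α) (hR : 0 < R)
    (s : ℝ) (hs : s = -2 * R)
    (x₁' x₂' : ℝ × ℝ) (z₁ z₂ : ℝ)
    (hx₁ : Real.sqrt (x₁'.1 ^ 2 + x₁'.2 ^ 2) < 1)
    (hx₂ : Real.sqrt (x₂'.1 ^ 2 + x₂'.2 ^ 2) < 1)
    (g₁ g₂ : ℝ)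
    (hg₁ : g₁ = Real.sqrt ((x₁'.1 - Real.cos θ₀) ^ 2 + (x₁'.2 - Real.sin θ₀) ^ 2))
    (hg₂ : g₂ = Real.sqrt ((x₂'.1 - Real.cos θ₀) ^ 2 + (x₂'.2 - Real.sin θ₀) ^ 2))
    (hg₁pos : 0 < g₁) (hg₂pos : 0 < g₂)
    (hlemon₁ : (g₁ + R) ^ 2 + (z₁ - z₀) ^ 2 = Real.sqrt (R ^ 2 + α ^ 2) ^ 2)
    (hlemon₂ : (g₂ + R) ^ 2 + (z₂ - z₀) ^ 2 = Real.sqrt (R ^ 2 + α ^ 2) ^ 2)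
    (hz₁ : |z₁ - z₀| < α) (hz₂ : |z₂ - z₀| < α)
    (hzg : (z₁ - z₀) / g₁ = (z₂ - z₀) / g₂)
    (hθ : (Real.sin θ₀ * (x₁'.1 - Real.cos θ₀) - Real.cos θ₀ * (x₁'.2 - Real.sin θ₀)) *
        (2 * g₁ - s) / g₁ ^ 2 =
      (Real.sin θ₀ * (x₂'.1 - Real.cos θ₀) - Real.cos θ₀ * (x₂'.2 - Real.sin θ₀)) *
        (2 * g₂ - s) / g₂ ^ 2) :
    x₁' = x₂' ∧ z₁ = z₂ := by
  have csq : Real.cos θ₀ ^ 2 + Real.sin θ₀ ^ 2 = 1 := by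
    have := Real.sin_sq_add_cos_sq θ₀; linarith
  have hp : Real.sqrt (R ^ 2 + α ^ 2) ^ 2 = R ^ 2 + α ^ 2 :=
    Real.sq_sqrt (by positivity)
  have hg₁sq : g₁ ^ 2 = (x₁'.1 - Real.cos θ₀) ^ 2 + (x₁'.2 - Real.sin θ₀) ^ 2 := by
    rw [hg₁]; exact Real.sq_sqrt (by positivity)
  have hg₂sq : g₂ ^ 2 = (x₂'.1 - Real.cos θ₀) ^ 2 + (x₂'.2 - Real.sin θ₀) ^ 2 := by
    rw [hg₂]; exact Real.sq_sqrt (by positivity)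
  have hx₁' : x₁'.1 ^ 2 + x₁'.2 ^ 2 < 1 := by
    have h0 : (0:ℝ) ≤ x₁'.1 ^ 2 + x₁'.2 ^ 2 := by positivity
    calc x₁'.1 ^ 2 + x₁'.2 ^ 2 = Real.sqrt (x₁'.1 ^ 2 + x₁'.2 ^ 2) ^ 2 :=
          (Real.sq_sqrt h0).symm
      _ < 1 := pow_lt_one₀ (Real.sqrt_nonneg _) hx₁ two_ne_zero
  have hx₂' : x₂'.1 ^ 2 + x₂'.2 ^ 2 < 1 := by
    have h0 : (0:ℝ) ≤ x₂'.1 ^ 2 + x₂'.2 ^ 2 := by positivity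
    calc x₂'.1 ^ 2 + x₂'.2 ^ 2 = Real.sqrt (x₂'.1 ^ 2 + x₂'.2 ^ 2) ^ 2 :=
          (Real.sq_sqrt h0).symm
      _ < 1 := pow_lt_one₀ (Real.sqrt_nonneg _) hx₂ two_ne_zero
  rw [hp] at hlemon₁ hlemon₂
  -- Step 1: g₁ = g₂ and z₁ = z₂
  set t : ℝ := (z₁ - z₀) / g₁ with ht
  have hz1 : z₁ - z₀ = t * g₁ := by rw [ht]; field_simp
  have hz2 : z₂ - z₀ = t * g₂ := by rw [hzg]; field_simp
  have hl1 : (g₁ + R) ^ 2 + (t * g₁) ^ 2 = R ^ 2 + α ^ 2 := by rw [← hz1]; exact hlemon₁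
  have hl2 : (g₂ + R) ^ 2 + (t * g₂) ^ 2 = R ^ 2 + α ^ 2 := by rw [← hz2]; exact hlemon₂
  have hfac : (g₁ - g₂) * ((1 + t ^ 2) * (g₁ + g₂) + 2 * R) = 0 := by
    linear_combination hl1 - hl2
  have hposfac : 0 < (1 + t ^ 2) * (g₁ + g₂) + 2 * R := by
    have h1 : 0 < 1 + t ^ 2 := by positivity
    have h2 : 0 < g₁ + g₂ := by linarith
    have := mul_pos h1 h2
    linarith
  have hgg : g₁ = g₂ := by
    rcases mul_eq_zero.mp hfac with h | h
    · linarith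
    · linarith
  have hzz : z₁ = z₂ := by
    have : z₁ - z₀ = z₂ - z₀ := by rw [hz1, hz2, hgg]
    linarith
  -- Step 2: the perpendicular components agree
  set w₁ : ℝ := Real.sin θ₀ * (x₁'.1 - Real.cos θ₀) - Real.cos θ₀ * (x₁'.2 - Real.sin θ₀) with hw₁
  set w₂ : ℝ := Real.sin θ₀ * (x₂'.1 - Real.cos θ₀) - Real.cos θ₀ * (x₂'.2 - Real.sin θ₀) with hw₂
  have h2s : 0 < 2 * g₁ - s := by rw [hs]; linarith
  have hw : w₁ = w₂ := by
    rw [← hgg] at hθ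
    have hne : (g₁ : ℝ) ^ 2 ≠ 0 := pow_ne_zero _ (ne_of_gt hg₁pos)
    have hgsq : (0:ℝ) < g₁ ^ 2 := pow_pos hg₁pos 2
    have h1 : w₁ * (2 * g₁ - s) * g₁ ^ 2 = w₂ * (2 * g₁ - s) * g₁ ^ 2 :=
      (div_eq_div_iff (ne_of_gt hgsq) (ne_of_gt hgsq)).mp hθ
    have h2 := mul_right_cancel₀ (ne_of_gt hgsq) h1
    exact mul_right_cancel₀ (ne_of_gt h2s) h2
  -- Step 3: the radial components agree
  set v₁ : ℝ := Real.cos θ₀ * (x₁'.1 - Real.cos θ₀) + Real.sin θ₀ * (x₁'.2 - Real.sin θ₀) with hv₁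
  set v₂ : ℝ := Real.cos θ₀ * (x₂'.1 - Real.cos θ₀) + Real.sin θ₀ * (x₂'.2 - Real.sin θ₀) with hv₂
  have hvw₁ : v₁ ^ 2 + w₁ ^ 2 = g₁ ^ 2 := by
    rw [hv₁, hw₁]
    linear_combination ((x₁'.1 - Real.cos θ₀) ^ 2 + (x₁'.2 - Real.sin θ₀) ^ 2) * csq - hg₁sq
  have hvw₂ : v₂ ^ 2 + w₂ ^ 2 = g₂ ^ 2 := by
    rw [hv₂, hw₂]
    linear_combination ((x₂'.1 - Real.cos θ₀) ^ 2 + (x₂'.2 - Real.sin θ₀) ^ 2) * csq - hg₂sq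
  have hv1neg : 2 * v₁ < - g₁ ^ 2 := by
    have h : x₁'.1 ^ 2 + x₁'.2 ^ 2 = 1 + 2 * v₁ + g₁ ^ 2 := by
      rw [hv₁]; linear_combination csq - hg₁sq
    linarith
  have hv2neg : 2 * v₂ < - g₂ ^ 2 := by
    have h : x₂'.1 ^ 2 + x₂'.2 ^ 2 = 1 + 2 * v₂ + g₂ ^ 2 := by
      rw [hv₂]; linear_combination csq - hg₂sq
    linarith
  have hvsq : v₁ ^ 2 = v₂ ^ 2 := by
    have := hvw₂; rw [← hgg, ← hw] at this; linarith [hvw₁]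
  have hv : v₁ = v₂ := by
    have hfac2 : (v₁ - v₂) * (v₁ + v₂) = 0 := by linear_combination hvsq
    rcases mul_eq_zero.mp hfac2 with h | h
    · linarith
    · exfalso
      have p1 := pow_pos hg₁pos 2
      have p2 := pow_pos hg₂pos 2
      linarith
  -- Step 4: conclude
  have ha : x₁'.1 = x₂'.1 := by
    have e1 : x₁'.1 - Real.cos θ₀ = Real.cos θ₀ * v₁ + Real.sin θ₀ * w₁ := by
      rw [hv₁, hw₁]; linear_combination (-(x₁'.1 - Real.cos θ₀)) * csq
    have e2 : x₂'.1 - Real.cos θ₀ = Real.cos θ₀ * v₂ + Real.sin θ₀ * w₂ := by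
      rw [hv₂, hw₂]; linear_combination (-(x₂'.1 - Real.cos θ₀)) * csq
    rw [hv, hw] at e1; linarith [e1, e2]
  have hb : x₁'.2 = x₂'.2 := by
    have e1 : x₁'.2 - Real.sin θ₀ = Real.sin θ₀ * v₁ - Real.cos θ₀ * w₁ := by
      rw [hv₁, hw₁]; linear_combination (-(x₁'.2 - Real.sin θ₀)) * csq
    have e2 : x₂'.2 - Real.sin θ₀ = Real.sin θ₀ * v₂ - Real.cos θ₀ * w₂ := by
      rw [hv₂, hw₂]; linear_combination (-(x₂'.2 - Real.sin θ₀)) * csq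
    rw [hv, hw] at e1; linarith [e1, e2]
  exact ⟨Prod.ext ha hb, hzz⟩
end

section
/- Let α > 0, σ ≠ 0, θ₀, z₀ ∈ ℝ, Θ₀ = (cos θ₀, sin θ₀). Let x = (x, y, z) ∈ ℝ³ with (x, y) ≠ Θ₀, set g = √((x − cos θ₀)² + (y − sin θ₀)²), x_T = (x − cos θ₀, y − sin θ₀, z − z₀), s = (|x_T|² − α²)/g, v = (x − cos θ₀, y − sin θ₀, 0), and u = (3[(z−z₀)² − α²](x − cos θ₀), 3[(z−z₀)² − α²](y − sin θ₀), −2g²(z − z₀)). Define r₁ = (1/g)·((2 − s/g)(x − cos θ₀), (2 − s/g)(y − sin θ₀), 2(z − z₀)), r₂ = (2σ/g)·(−(z−z₀)(x − cos θ₀)/g², −(z−z₀)(y − sin θ₀)/g², 1), and r₃ = (σ/g)(2 − s/g)·(sin θ₀, −cos θ₀, 0) + (σ·(sin θ₀·(x − cos θ₀) − cos θ₀·(y − sin θ₀))/g³)·(−v + u/g²). Then r₁ × r₂ = ±(2σ(|x_T|² + α²)/g⁴)·(−(y − sin θ₀), (x − cos θ₀), 0) and |det(r₁, r₂, r₃)|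 = |2 − s/g| · (2σ²(|x_T|² + α²)/g⁵) · |cos θ₀·x + sin θ₀·y − 1|. In particular, if additionally 2 − s/g ≠ 0 and √(x² + y²) < 1, then det(r₁, r₂, r₃) ≠ 0. -/
/-!
Write `(A, B, C) = x - (cos θ₀, sin θ₀, z₀)` and `k = 2 - s / g`. Both `r₁` and `r₂` lie in the
plane spanned by the radial direction `(A, B, 0)` and the vertical, so `r₁ × r₂` is a multiple of
the horizontal normal `(B, -A, 0)`, and `k g² + 2 C² = |x_T|² + α²` identifies the factor. The
second summand of `r₃` also lies in that plane, so only `(σ k / g) (sin θ₀, -cos θ₀, 0)` contributes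
to `det(r₁, r₂, r₃) = r₃ · (r₁ × r₂)`, giving the factor `cos θ₀ A + sin θ₀ B = Θ₀ · x - 1`, which
is negative inside the unit cylinder by Cauchy–Schwarz.
-/

open Real

def cross3 (a b : ℝ × ℝ × ℝ) : ℝ × ℝ × ℝ :=
  (a.2.1 * b.2.2 - a.2.2 * b.2.1, a.2.2 * b.1 - a.1 * b.2.2, a.1 * b.2.1 - a.2.1 * b.1)

def det3 (a b c : ℝ × ℝ × ℝ) : ℝ :=
  a.1 * (b.2.1 * c.2.2 - b.2.2 * c.2.1) - a.2.1 * (b.1 * c.2.2 - b.2.2 * c.1) +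
    a.2.2 * (b.1 * c.2.1 - b.2.1 * c.1)

theorem sub_sq_add_sub_sq_pos {x y a b : ℝ} (h : (x, y) ≠ (a, b)) :
    0 < (x - a) ^ 2 + (y - b) ^ 2 := by
  rcases not_and_or.mp (mt Prod.ext_iff.mpr h) with hx | hy
  · have := sub_ne_zero.mpr hx
    positivity
  · have := sub_ne_zero.mpr hy
    positivity

theorem det3_eq_dot_cross3 (a b c : ℝ × ℝ × ℝ) :
    det3 a b c = c.1 * (cross3 a b).1 + c.2.1 * (cross3 a b).2.1 + c.2.2 * (cross3 a b).2.2 := by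
  simp only [det3, cross3]
  ring

theorem det3_eq_of_cross3_eq_smul {a b : ℝ × ℝ × ℝ} {q A B : ℝ}
    (h : cross3 a b = q • (B, -A, 0)) (c : ℝ × ℝ × ℝ) :
    det3 a b c = q * (c.1 * B - c.2.1 * A) := by
  simp only [det3_eq_dot_cross3, h, Prod.smul_mk, smul_eq_mul]
  ring

theorem cross3_radial_vertical (A B C k σ : ℝ) {g : ℝ} (hg : g ≠ 0) :
    cross3 ((1 / g) • (k * A, k * B, 2 * C))
        ((2 * σ / g) • (-(C * A) / g ^ 2, -(C * B) / g ^ 2, 1)) =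
      (2 * σ * (k * g ^ 2 + 2 * C ^ 2) / g ^ 4) • (B, -A, 0) := by
  simp only [cross3, Prod.smul_mk, smul_eq_mul, Prod.mk.injEq]
  refine ⟨?_, ?_, ?_⟩ <;> field_simp <;> ring

theorem horizontal_normal_component_of_rotated_add_radial_vertical {θ A B p q e f t : ℝ}
    {r : ℝ × ℝ × ℝ}
    (hr : r = p • ((sin θ, -cos θ, 0) : ℝ × ℝ × ℝ) + q • (-(A, B, 0) + e • (f * A, f * B, t))) :
    r.1 * B - r.2.1 * A = p * (cos θ * A + sin θ * B) := by
  simp only [hr, Prod.smul_mk, smul_eq_mul, Prod.neg_mk, Prod.mk_add_mk]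
  ring

theorem cos_mul_add_sin_mul_lt_one (θ : ℝ) {x y : ℝ} (h : √(x ^ 2 + y ^ 2) < 1) :
    cos θ * x + sin θ * y < 1 := by
  rw [Real.sqrt_lt' one_pos, one_pow] at h
  refine lt_of_abs_lt (abs_lt_of_sq_lt_sq ?_ zero_le_one)
  nlinarith [sq_nonneg (cos θ * y - sin θ * x), sin_sq_add_cos_sq θ]

theorem lemonRL_leftProjection_immersion_det_general
    (α σ θ₀ z₀ x y z : ℝ) (hα : 0 < α) (hσ : σ ≠ 0)
    (hne : (x, y) ≠ (Real.cos θ₀, Real.sin θ₀))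
    (g xT2 s w : ℝ) (vv uu r₁ r₂ r₃ : ℝ × ℝ × ℝ)
    (hg : g = Real.sqrt ((x - Real.cos θ₀) ^ 2 + (y - Real.sin θ₀) ^ 2))
    (hxT2 : xT2 = (x - Real.cos θ₀) ^ 2 + (y - Real.sin θ₀) ^ 2 + (z - z₀) ^ 2)
    (hs : s = (xT2 - α ^ 2) / g)
    (hvv : vv = (x - Real.cos θ₀, y - Real.sin θ₀, 0))
    (huu : uu = (3 * ((z - z₀) ^ 2 - α ^ 2) * (x - Real.cos θ₀),
      3 * ((z - z₀) ^ 2 - α ^ 2) * (y - Real.sin θ₀), -2 * g ^ 2 * (z - z₀)))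
    (hr₁ : r₁ = (1 / g) • ((2 - s / g) * (x - Real.cos θ₀),
      (2 - s / g) * (y - Real.sin θ₀), 2 * (z - z₀)))
    (hr₂ : r₂ = (2 * σ / g) • (-((z - z₀) * (x - Real.cos θ₀)) / g ^ 2,
      -((z - z₀) * (y - Real.sin θ₀)) / g ^ 2, 1))
    (hr₃ : r₃ = (σ / g * (2 - s / g)) • ((Real.sin θ₀, -Real.cos θ₀, 0) : ℝ × ℝ × ℝ) +
      (σ * w / g ^ 3) • (-vv + (1 / g ^ 2) • uu)) :
    (cross3 r₁ r₂ =
        (2 * σ * (xT2 + α ^ 2) / g ^ 4) • (-(y - Real.sin θ₀), x - Real.cos θ₀, (0 : ℝ)) ∨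
      cross3 r₁ r₂ =
        -((2 * σ * (xT2 + α ^ 2) / g ^ 4) •
          (-(y - Real.sin θ₀), x - Real.cos θ₀, (0 : ℝ)))) ∧
    |det3 r₁ r₂ r₃| =
      |2 - s / g| * (2 * σ ^ 2 * (xT2 + α ^ 2) / g ^ 5) *
        |Real.cos θ₀ * x + Real.sin θ₀ * y - 1| ∧
    (2 - s / g ≠ 0 → Real.sqrt (x ^ 2 + y ^ 2) < 1 → det3 r₁ r₂ r₃ ≠ 0) := by
  set A := x - cos θ₀
  set B := y - sin θ₀
  set C := z - z₀
  set k := 2 - s / g with hk_def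
  have hAB : 0 < A ^ 2 + B ^ 2 := sub_sq_add_sub_sq_pos hne
  have hg_pos : 0 < g := hg ▸ sqrt_pos.mpr hAB
  have hg_sq : g ^ 2 = A ^ 2 + B ^ 2 := hg ▸ sq_sqrt hAB.le
  have hk : k * g ^ 2 + 2 * C ^ 2 = xT2 + α ^ 2 := by
    rw [hk_def, hs, hxT2]
    field_simp
    linear_combination 2 * hg_sq
  have hcross : cross3 r₁ r₂ = (2 * σ * (xT2 + α ^ 2) / g ^ 4) • (B, -A, 0) := by
    rw [hr₁, hr₂, ← hk, ← cross3_radial_vertical A B C k σ hg_pos.ne']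
  have hplane : cos θ₀ * A + sin θ₀ * B = cos θ₀ * x + sin θ₀ * y - 1 := by
    linear_combination -sin_sq_add_cos_sq θ₀
  have hdet : det3 r₁ r₂ r₃ =
      k * (2 * σ ^ 2 * (xT2 + α ^ 2) / g ^ 5) * (cos θ₀ * x + sin θ₀ * y - 1) := by
    rw [hvv, huu] at hr₃
    rw [det3_eq_of_cross3_eq_smul hcross,
      horizontal_normal_component_of_rotated_add_radial_vertical hr₃, hplane]
    field_simp
  have hQ : 0 < 2 * σ ^ 2 * (xT2 + α ^ 2) / g ^ 5 := by
    rw [hxT2]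
    positivity
  refine ⟨Or.inr ?_, ?_, fun hk0 hxy => ?_⟩
  · rw [hcross, ← smul_neg, Prod.neg_mk, Prod.neg_mk, neg_neg, neg_zero]
  · rw [hdet, abs_mul, abs_mul, abs_of_pos hQ]
  · rw [hdet]
    exact mul_ne_zero (mul_ne_zero hk0 hQ.ne')
      (sub_ne_zero.mpr (cos_mul_add_sin_mul_lt_one θ₀ hxy).ne)

/-- Immersion property of the left projection of the canonical relation of the limited-data
lemon transform `R_L`: cross-product and determinant formulas for the gradients
`r₁ = ∇s`, `r₂ = ∇(∂Φ/∂z₀)`, `r₃ = ∇(∂Φ/∂θ₀)`, and nonvanishing of the determinant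
inside the open unit cylinder. -/
theorem lemonRL_leftProjection_immersion_det
    (α σ θ₀ z₀ x y z : ℝ) (hα : 0 < α) (hσ : σ ≠ 0)
    (hne : (x, y) ≠ (Real.cos θ₀, Real.sin θ₀))
    (g xT2 s w : ℝ) (vv uu r₁ r₂ r₃ : ℝ × ℝ × ℝ)
    (hg : g = Real.sqrt ((x - Real.cos θ₀) ^ 2 + (y - Real.sin θ₀) ^ 2))
    (hxT2 : xT2 = (x - Real.cos θ₀) ^ 2 + (y - Real.sin θ₀) ^ 2 + (z - z₀) ^ 2)
    (hs : s = (xT2 - α ^ 2) / g)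
    (hw : w = Real.sin θ₀ * (x - Real.cos θ₀) - Real.cos θ₀ * (y - Real.sin θ₀))
    (hvv : vv = (x - Real.cos θ₀, y - Real.sin θ₀, 0))
    (huu : uu = (3 * ((z - z₀) ^ 2 - α ^ 2) * (x - Real.cos θ₀),
      3 * ((z - z₀) ^ 2 - α ^ 2) * (y - Real.sin θ₀), -2 * g ^ 2 * (z - z₀)))
    (hr₁ : r₁ = (1 / g) • ((2 - s / g) * (x - Real.cos θ₀),
      (2 - s / g) * (y - Real.sin θ₀), 2 * (z - z₀)))
    (hr₂ : r₂ = (2 * σ / g) • (-((z - z₀) * (x - Real.cos θ₀)) / g ^ 2,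
      -((z - z₀) * (y - Real.sin θ₀)) / g ^ 2, 1))
    (hr₃ : r₃ = (σ / g * (2 - s / g)) • ((Real.sin θ₀, -Real.cos θ₀, 0) : ℝ × ℝ × ℝ) +
      (σ * w / g ^ 3) • (-vv + (1 / g ^ 2) • uu)) :
    (cross3 r₁ r₂ =
        (2 * σ * (xT2 + α ^ 2) / g ^ 4) • (-(y - Real.sin θ₀), x - Real.cos θ₀, (0 : ℝ)) ∨
      cross3 r₁ r₂ =
        -((2 * σ * (xT2 + α ^ 2) / g ^ 4) •
          (-(y - Real.sin θ₀), x - Real.cos θ₀, (0 : ℝ)))) ∧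
    |det3 r₁ r₂ r₃| =
      |2 - s / g| * (2 * σ ^ 2 * (xT2 + α ^ 2) / g ^ 5) *
        |Real.cos θ₀ * x + Real.sin θ₀ * y - 1| ∧
    (2 - s / g ≠ 0 → Real.sqrt (x ^ 2 + y ^ 2) < 1 → det3 r₁ r₂ r₃ ≠ 0) :=
  lemonRL_leftProjection_immersion_det_general α σ θ₀ z₀ x y z hα hσ hne g xT2 s w vv uu r₁ r₂ r₃ hg
    hxT2 hs hvv huu hr₁ hr₂ hr₃
end

section
/- Let σ ≠ 0, R > 0, θ₀, z₀ ∈ ℝ, Θ₀ = (cos θ₀, sin θ₀), Θ₀⊥ = (sin θ₀, −cos θ₀). Let x = (x, y, z) ∈ ℝ³ with (x, y) ≠ Θ₀, set g = √((x − cos θ₀)² + (y − sin θ₀)²), v = (x − cos θ₀, y − sin θ₀, 0), w = sin θ₀·(x − cos θ₀) − cos θ₀·(y − sin θ₀), and e₃ = (0,0,1). Define r₁ = 2σ·(−(R/g³)·w·v + (1 + R/g)·(sin θ₀, −cos θ₀, 0)), r₂ = 2·(−((g+R)/g³)·v + (z − z₀)·e₃), and r₃ = 2σ·e₃. Then det(r₁,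 r₂, r₃) = −8σ²·((g+R)²/g⁴)·(cos θ₀·x + sin θ₀·y − 1). In particular, if √(x² + y²) < 1 then det(r₁, r₂, r₃) ≠ 0. -/
/-!
The third gradient is vertical, so the determinant reduces to the `2 × 2` determinant of the
horizontal parts of `r₁` and `r₂`. Since the horizontal part of `r₂` is a multiple of `v`, the
`w • v` term of `r₁` drops out, leaving `(sin θ₀, -cos θ₀) ∧ v = cos θ₀ * x + sin θ₀ * y - 1`.
Inside the unit cylinder this is negative by Cauchy–Schwarz.
-/

open Real

lemma det3_mk_zero_zero (a b : ℝ × ℝ × ℝ) (c : ℝ) :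
    det3 a b (0, 0, c) = c * (a.1 * b.2.1 - a.2.1 * b.1) := by
  simp only [det3]
  ring

/-- Holds for every `g`, including the junk case `g = 0` where both sides vanish. -/
lemma div_pow_three_mul_one_add_div (g R : ℝ) :
    (g + R) / g ^ 3 * (1 + R / g) = (g + R) ^ 2 / g ^ 4 := by
  rcases eq_or_ne g 0 with rfl | hg
  · simp
  · field_simp

lemma det3_lemonR_gradients (σ R g w ζ a b c s : ℝ) :
    det3 ((2 * σ) • ((-(R / g ^ 3) * w) • ((a, b, 0) : ℝ × ℝ × ℝ) +
        (1 + R / g) • ((s, -c, 0) : ℝ × ℝ × ℝ)))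
      ((2 : ℝ) • ((-((g + R) / g ^ 3)) • ((a, b, 0) : ℝ × ℝ × ℝ) +
        ζ • ((0, 0, 1) : ℝ × ℝ × ℝ)))
      ((2 * σ) • ((0, 0, 1) : ℝ × ℝ × ℝ)) =
      -8 * σ ^ 2 * ((g + R) ^ 2 / g ^ 4) * (c * a + s * b) := by
  rw [← div_pow_three_mul_one_add_div]
  simp only [Prod.smul_mk, Prod.mk_add_mk, smul_eq_mul, mul_zero, mul_one, det3_mk_zero_zero]
  ring

lemma mul_add_mul_lt_one_of_sqrt_lt_one {c s x y : ℝ} (hcs : c ^ 2 + s ^ 2 = 1)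
    (hxy : √(x ^ 2 + y ^ 2) < 1) : c * x + s * y < 1 := by
  have hxy' : x ^ 2 + y ^ 2 < 1 := by
    rwa [Real.sqrt_lt' one_pos, one_pow] at hxy
  nlinarith [sq_nonneg (s * x - c * y), sq_nonneg (c * x + s * y - 1)]

lemma sqrt_sub_sq_add_sub_sq_pos {x y a b : ℝ} (h : (x, y) ≠ (a, b)) :
    0 < √((x - a) ^ 2 + (y - b) ^ 2) := by
  have hne : x - a ≠ 0 ∨ y - b ≠ 0 := by
    contrapose! h
    rw [sub_eq_zero.1 h.1, sub_eq_zero.1 h.2]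
  apply Real.sqrt_pos.2
  rcases hne with hne | hne <;> positivity

theorem lemonR_leftProjection_immersion_det_general
    (σ R θ₀ z₀ x y z : ℝ) (hσ : σ ≠ 0) (hR : 0 < R)
    (hne : (x, y) ≠ (Real.cos θ₀, Real.sin θ₀))
    (g w : ℝ) (vv e₃ r₁ r₂ r₃ : ℝ × ℝ × ℝ)
    (hg : g = Real.sqrt ((x - Real.cos θ₀) ^ 2 + (y - Real.sin θ₀) ^ 2))
    (hvv : vv = (x - Real.cos θ₀, y - Real.sin θ₀, 0))
    (he₃ : e₃ = (0, 0, 1))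
    (hr₁ : r₁ = (2 * σ) • ((-(R / g ^ 3) * w) • vv +
      (1 + R / g) • ((Real.sin θ₀, -Real.cos θ₀, 0) : ℝ × ℝ × ℝ)))
    (hr₂ : r₂ = (2 : ℝ) • ((-((g + R) / g ^ 3)) • vv + (z - z₀) • e₃))
    (hr₃ : r₃ = (2 * σ) • e₃) :
    det3 r₁ r₂ r₃ =
      -8 * σ ^ 2 * ((g + R) ^ 2 / g ^ 4) *
        (Real.cos θ₀ * x + Real.sin θ₀ * y - 1) ∧
    (Real.sqrt (x ^ 2 + y ^ 2) < 1 → det3 r₁ r₂ r₃ ≠ 0) := by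
  have hdet : det3 r₁ r₂ r₃ =
      -8 * σ ^ 2 * ((g + R) ^ 2 / g ^ 4) * (Real.cos θ₀ * x + Real.sin θ₀ * y - 1) := by
    subst hr₁ hr₂ hr₃ hvv he₃
    rw [det3_lemonR_gradients]
    linear_combination (8 * σ ^ 2 * ((g + R) ^ 2 / g ^ 4)) * Real.cos_sq_add_sin_sq θ₀
  refine ⟨hdet, fun hxy => ?_⟩
  have hg_pos : 0 < g := hg ▸ sqrt_sub_sq_add_sub_sq_pos hne
  have hlin := mul_add_mul_lt_one_of_sqrt_lt_one (Real.cos_sq_add_sin_sq θ₀) hxy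
  rw [hdet]
  have : 0 < (g + R) ^ 2 / g ^ 4 := by positivity
  exact mul_ne_zero (by positivity) (sub_ne_zero.2 hlin.ne)

/-- Immersion property of the left projection of the canonical relation of the lemon
transform `R`: determinant formula for the gradients `r₁ = ∇(∂Φ/∂θ₀)`, `r₂ = ∇t`,
`r₃ = ∇(∂Φ/∂z₀)`, and its nonvanishing in the open unit cylinder. -/
theorem lemonR_leftProjection_immersion_det
    (σ R θ₀ z₀ x y z : ℝ) (hσ : σ ≠ 0) (hR : 0 < R)
    (hne : (x, y) ≠ (Real.cos θ₀, Real.sin θ₀))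
    (g w : ℝ) (vv e₃ r₁ r₂ r₃ : ℝ × ℝ × ℝ)
    (hg : g = Real.sqrt ((x - Real.cos θ₀) ^ 2 + (y - Real.sin θ₀) ^ 2))
    (hw : w = Real.sin θ₀ * (x - Real.cos θ₀) - Real.cos θ₀ * (y - Real.sin θ₀))
    (hvv : vv = (x - Real.cos θ₀, y - Real.sin θ₀, 0))
    (he₃ : e₃ = (0, 0, 1))
    (hr₁ : r₁ = (2 * σ) • ((-(R / g ^ 3) * w) • vv +
      (1 + R / g) • ((Real.sin θ₀, -Real.cos θ₀, 0) : ℝ × ℝ × ℝ)))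
    (hr₂ : r₂ = (2 : ℝ) • ((-((g + R) / g ^ 3)) • vv + (z - z₀) • e₃))
    (hr₃ : r₃ = (2 * σ) • e₃) :
    det3 r₁ r₂ r₃ =
      -8 * σ ^ 2 * ((g + R) ^ 2 / g ^ 4) *
        (Real.cos θ₀ * x + Real.sin θ₀ * y - 1) ∧
    (Real.sqrt (x ^ 2 + y ^ 2) < 1 → det3 r₁ r₂ r₃ ≠ 0) :=
  lemonR_leftProjection_immersion_det_general σ R θ₀ z₀ x y z hσ hR hne g w vv e₃ r₁ r₂ r₃ hg hvv
    he₃ hr₁ hr₂ hr₃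
end

section
/- Let R ≥ 0, θ₀, z₀ ∈ ℝ, Θ₀ = (cos θ₀, sin θ₀), and let x = (x′, z) ∈ ℝ² × ℝ with |x′| < 1. Define Ψ(x′, z) = (|x′ − Θ₀| + R)² + (z − z₀)². Then Ψ is differentiable at x, and its gradient ∇Ψ(x) = (2(g+R)(x′ − Θ₀)/g, 2(z − z₀)) with g = |x′ − Θ₀| is not parallel to (0, 0, 1); that is, the normal direction to any lemon through a point of the open unit cylinder is never parallel to the cylinder axis. -/
/-!
Since `|x′| < 1 = |Θ₀|`, the point `x′` differs from `Θ₀`, so `g > 0` and `Ψ` is differentiable at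
`x` by the chain rule. The horizontal part of `∇Ψ(x)` is the nonzero vector `x′ - Θ₀` scaled by
`2 (g + R) / g > 0`, so `∇Ψ(x)` is not vertical.
-/

open Real

def dotL (n : ℝ × ℝ × ℝ) : ℝ × ℝ × ℝ →L[ℝ] ℝ :=
  n.1 • ContinuousLinearMap.fst ℝ ℝ (ℝ × ℝ) +
    n.2.1 • (ContinuousLinearMap.fst ℝ ℝ ℝ).comp (ContinuousLinearMap.snd ℝ ℝ (ℝ × ℝ)) +
    n.2.2 • (ContinuousLinearMap.snd ℝ ℝ ℝ).comp (ContinuousLinearMap.snd ℝ ℝ (ℝ × ℝ))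

@[simp]
lemma dotL_apply (n q : ℝ × ℝ × ℝ) : dotL n q = n.1 * q.1 + n.2.1 * q.2.1 + n.2.2 * q.2.2 := rfl

lemma sq_dist_pos_of_sqrt_lt_one {a b u v : ℝ} (hab : √(a ^ 2 + b ^ 2) < 1)
    (huv : u ^ 2 + v ^ 2 = 1) : 0 < (a - u) ^ 2 + (b - v) ^ 2 := by
  by_contra! h
  have hu : a = u := by nlinarith [sq_nonneg (a - u), sq_nonneg (b - v)]
  have hv : b = v := by nlinarith [sq_nonneg (a - u), sq_nonneg (b - v)]
  rw [hu, hv, huv, sqrt_one] at hab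
  exact hab.false

lemma hasFDerivAt_lemon (u v w R g : ℝ) {p : ℝ × ℝ × ℝ}
    (hg : g = √((p.1 - u) ^ 2 + (p.2.1 - v) ^ 2)) (hp : 0 < (p.1 - u) ^ 2 + (p.2.1 - v) ^ 2) :
    HasFDerivAt
      (fun q : ℝ × ℝ × ℝ => (√((q.1 - u) ^ 2 + (q.2.1 - v) ^ 2) + R) ^ 2 + (q.2.2 - w) ^ 2)
      (dotL (2 * (g + R) * (p.1 - u) / g, 2 * (g + R) * (p.2.1 - v) / g, 2 * (p.2.2 - w))) p := by
  have hg0 : g ≠ 0 := hg ▸ (sqrt_pos.2 hp).ne'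
  have hx := (hasFDerivAt_fst (𝕜 := ℝ) (p := p)).sub_const u
  have hy := ((hasFDerivAt_snd (𝕜 := ℝ) (p := p)).fst).sub_const v
  have hz := ((hasFDerivAt_snd (𝕜 := ℝ) (p := p)).snd).sub_const w
  have hΨ := ((((hx.pow 2).add (hy.pow 2)).sqrt hp.ne').add_const R |>.pow 2).add (hz.pow 2)
  refine hΨ.congr_fderiv ?_
  refine ContinuousLinearMap.ext fun q => ?_
  simp [← hg, field]

lemma ne_smul_axis {x y z : ℝ} (h : x ≠ 0 ∨ y ≠ 0) (t : ℝ) :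
    ((x, y, z) : ℝ × ℝ × ℝ) ≠ t • ((0, 0, 1) : ℝ × ℝ × ℝ) := by
  intro hxyz
  simp only [Prod.smul_mk, smul_zero, Prod.mk.injEq] at hxyz
  tauto

/-- The normal direction to any lemon through a point of the open unit cylinder is never
parallel to the cylinder axis: the defining function `Ψ` is differentiable, its gradient is
given by the stated formula, and that gradient is not a multiple of `(0,0,1)`. -/
theorem lemon_normal_never_axial
    (R θ₀ z₀ : ℝ) (hR : 0 ≤ R) (a b c : ℝ)
    (hab : Real.sqrt (a ^ 2 + b ^ 2) < 1)
    (g : ℝ) (hg : g = Real.sqrt ((a - Real.cos θ₀) ^ 2 + (b - Real.sin θ₀) ^ 2)) :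
    DifferentiableAt ℝ
      (fun q : ℝ × ℝ × ℝ =>
        (Real.sqrt ((q.1 - Real.cos θ₀) ^ 2 + (q.2.1 - Real.sin θ₀) ^ 2) + R) ^ 2 +
          (q.2.2 - z₀) ^ 2) (a, b, c) ∧
    (∀ v : ℝ × ℝ × ℝ,
      fderiv ℝ
        (fun q : ℝ × ℝ × ℝ =>
          (Real.sqrt ((q.1 - Real.cos θ₀) ^ 2 + (q.2.1 - Real.sin θ₀) ^ 2) + R) ^ 2 +
            (q.2.2 - z₀) ^ 2) (a, b, c) v =
        2 * (g + R) * (a - Real.cos θ₀) / g * v.1 +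
          2 * (g + R) * (b - Real.sin θ₀) / g * v.2.1 + 2 * (c - z₀) * v.2.2) ∧
    (∀ t : ℝ,
      ((2 * (g + R) * (a - Real.cos θ₀) / g, 2 * (g + R) * (b - Real.sin θ₀) / g,
          2 * (c - z₀)) : ℝ × ℝ × ℝ) ≠ t • ((0, 0, 1) : ℝ × ℝ × ℝ)) := by
  have hS := sq_dist_pos_of_sqrt_lt_one hab (cos_sq_add_sin_sq θ₀)
  have hg0 : 0 < g := hg ▸ sqrt_pos.2 hS
  have hΨ := hasFDerivAt_lemon (cos θ₀) (sin θ₀) z₀ R g (p := (a, b, c)) hg hS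
  refine ⟨hΨ.differentiableAt, fun v => by rw [hΨ.fderiv, dotL_apply], ne_smul_axis ?_⟩
  have hd : a - cos θ₀ ≠ 0 ∨ b - sin θ₀ ≠ 0 := by
    by_contra! h
    simp [h.1, h.2] at hS
  have hk : 2 * (g + R) / g ≠ 0 := by positivity
  rw [mul_div_right_comm, mul_div_right_comm _ (b - _)]
  exact hd.imp (mul_ne_zero hk) (mul_ne_zero hk)
end
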